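/- arXiv:2205.03211 — 6 statements merged into one kernel-verified Lean document; each statement's English description precedes it below -/
import Mathlib

section
/- If a rectangular design with k < mn satisfies θ₁ = θ₂ = 0 (Latin semi-regular), then λ₃ − λ₂ = nr(mn − k)/d > 0 and λ₃ − λ₁ = mr(mn − k)/d > 0, where d = mn(m−1)(n−1). -/
/-! The conditions `θ₁ = 0`, `θ₂ = 0` and the counting relation are three linear equations in
`λ₁, λ₂, λ₃`; eliminating gives `(λ₃ − λ₂) d = n r (mn − k)` and `(λ₃ − λ₁) d = m r (mn − k)`,
and both right-hand sides are positive once `k < mn`. -/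

section LatinSemiRegular

variable {R : Type*} [CommRing R] {m n r k l1 l2 l3 : R}

theorem lambda_three_sub_lambda_two_mul_eq
    (hrel : (n - 1) * l1 + (m - 1) * l2 + (n - 1) * (m - 1) * l3 = r * (k - 1))
    (htheta1 : r - l1 + (m - 1) * (l2 - l3) = 0)
    (htheta2 : r - l2 + (n - 1) * (l1 - l3) = 0) :
    (l3 - l2) * (m * n * (m - 1) * (n - 1)) = n * r * (m * n - k) := by
  linear_combination (-n) * hrel + (-n * m * (n - 1)) * htheta1 + (-n * (m - 1)) * htheta2

/-- Transposing the rectangle swaps `m ↔ n` and `λ₁ ↔ λ₂`. -/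
theorem lambda_three_sub_lambda_one_mul_eq
    (hrel : (n - 1) * l1 + (m - 1) * l2 + (n - 1) * (m - 1) * l3 = r * (k - 1))
    (htheta1 : r - l1 + (m - 1) * (l2 - l3) = 0)
    (htheta2 : r - l2 + (n - 1) * (l1 - l3) = 0) :
    (l3 - l1) * (m * n * (m - 1) * (n - 1)) = m * r * (m * n - k) := by
  linear_combination
    lambda_three_sub_lambda_two_mul_eq (m := n) (n := m) (k := k) (l1 := l2) (l2 := l1)
      (by linear_combination hrel) htheta2 htheta1

end LatinSemiRegular

theorem eq_div_and_pos_of_mul_eq {K : Type*} [Field K] [LinearOrder K] [IsStrictOrderedRing K]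
    {x c d : K} (hd : 0 < d) (hc : 0 < c) (h : x * d = c) : x = c / d ∧ 0 < x := by
  have hx : x = c / d := eq_div_of_mul_eq hd.ne' h
  exact ⟨hx, hx ▸ div_pos hc hd⟩

theorem latin_semi_regular_lambda_diffs_general (m n : ℕ) (hm : 2 ≤ m) (hn : 2 ≤ n)
    (r k l1 l2 l3 : ℝ) (hr : 0 < r) (hk : k < (m : ℝ) * n)
    (hrel : ((n : ℝ) - 1) * l1 + ((m : ℝ) - 1) * l2
        + ((n : ℝ) - 1) * ((m : ℝ) - 1) * l3 = r * (k - 1))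
    (htheta1 : r - l1 + ((m : ℝ) - 1) * (l2 - l3) = 0)
    (htheta2 : r - l2 + ((n : ℝ) - 1) * (l1 - l3) = 0) :
    (l3 - l2 = (n : ℝ) * r * ((m : ℝ) * n - k) / ((m : ℝ) * n * ((m : ℝ) - 1) * ((n : ℝ) - 1))
      ∧ 0 < l3 - l2) ∧
    (l3 - l1 = (m : ℝ) * r * ((m : ℝ) * n - k) / ((m : ℝ) * n * ((m : ℝ) - 1) * ((n : ℝ) - 1))
      ∧ 0 < l3 - l1) := by
  have hm2 : (2 : ℝ) ≤ m := by exact_mod_cast hm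
  have hn2 : (2 : ℝ) ≤ n := by exact_mod_cast hn
  have hm0 : (0 : ℝ) < m := by linarith
  have hn0 : (0 : ℝ) < n := by linarith
  have hd : 0 < (m : ℝ) * n * ((m : ℝ) - 1) * ((n : ℝ) - 1) :=
    mul_pos (mul_pos (mul_pos hm0 hn0) (by linarith)) (by linarith)
  have hgap : 0 < (m : ℝ) * n - k := sub_pos.2 hk
  exact ⟨eq_div_and_pos_of_mul_eq hd (mul_pos (mul_pos hn0 hr) hgap)
      (lambda_three_sub_lambda_two_mul_eq hrel htheta1 htheta2),
    eq_div_and_pos_of_mul_eq hd (mul_pos (mul_pos hm0 hr) hgap)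
      (lambda_three_sub_lambda_one_mul_eq hrel htheta1 htheta2)⟩

/-- for a Latin semi-regular rectangular design (`θ₁ = θ₂ = 0`)
with `k < mn` and `r > 0`,
`λ₃ − λ₂ = nr(mn − k)/d > 0` and `λ₃ − λ₁ = mr(mn − k)/d > 0`,
where `d = mn(m−1)(n−1)`. -/
theorem latin_semi_regular_lambda_diffs (m n : ℕ) (hm : 2 ≤ m) (hn : 2 ≤ n)
    (b r k l1 l2 l3 : ℝ) (hr : 0 < r) (hk : k < (m : ℝ) * n)
    (hbk : b * k = (m : ℝ) * n * r)
    (hrel : ((n : ℝ) - 1) * l1 + ((m : ℝ) - 1) * l2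
        + ((n : ℝ) - 1) * ((m : ℝ) - 1) * l3 = r * (k - 1))
    (htheta1 : r - l1 + ((m : ℝ) - 1) * (l2 - l3) = 0)
    (htheta2 : r - l2 + ((n : ℝ) - 1) * (l1 - l3) = 0) :
    (l3 - l2 = (n : ℝ) * r * ((m : ℝ) * n - k) / ((m : ℝ) * n * ((m : ℝ) - 1) * ((n : ℝ) - 1))
      ∧ 0 < l3 - l2) ∧
    (l3 - l1 = (m : ℝ) * r * ((m : ℝ) * n - k) / ((m : ℝ) * n * ((m : ℝ) - 1) * ((n : ℝ) - 1))
      ∧ 0 < l3 - l1) :=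
  latin_semi_regular_lambda_diffs_general m n hm hn r k l1 l2 l3 hr hk hrel htheta1 htheta2
end

section
/- If a rectangular design is symmetric (b = v), then det(NNᵀ) = rk · θ₁^{n−1}θ₂^{m−1}θ₃^{(m−1)(n−1)} = (det N)², so θ₁^{n−1} · θ₂^{m−1} · θ₃^{(m−1)(n−1)} is a perfect square up to the factor rk. -/
open Matrix Kronecker

def Jmat (m : ℕ) : Matrix (Fin m) (Fin m) ℝ := Matrix.of fun _ _ => 1

def Pmat (m : ℕ) [NeZero m] : Matrix (Fin m) (Fin m) ℝ :=
  Matrix.of fun i j => if j = 0 then 1 else if i = j then 1 else 0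

def Tmat (m : ℕ) [NeZero m] : Matrix (Fin m) (Fin m) ℝ :=
  Matrix.of fun i j => if i = 0 then (if j = 0 then (m : ℝ) else 1) else 0

lemma JP (m : ℕ) [NeZero m] : Jmat m * Pmat m = Pmat m * Tmat m := by
  ext i j
  simp only [Jmat, Pmat, Tmat, Matrix.mul_apply, Matrix.of_apply, one_mul]
  by_cases hj : j = 0
  · subst hj
    simp [mul_ite, Finset.sum_ite_eq']
  · simp only [hj, if_false, mul_ite, mul_one, mul_zero, ite_mul, one_mul, zero_mul]
    rw [Finset.sum_ite_eq' Finset.univ j (fun _ => (1:ℝ)), Finset.sum_ite_eq' Finset.univ (0 : Fin m)]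
    simp [hj]

lemma detP (m : ℕ) [NeZero m] : (Pmat m).det = 1 := by
  have h : (Pmat m).BlockTriangular OrderDual.toDual := by
    intro i j hij
    have hij' : i < j := hij
    have hj0 : j ≠ 0 := by
      intro hj; rw [hj] at hij'; exact absurd hij' (not_lt.mpr (Fin.zero_le i))
    simp [Pmat, hj0, ne_of_lt hij']
  rw [Matrix.det_of_lowerTriangular _ h]
  have : ∀ i : Fin m, Pmat m i i = 1 := by
    intro i; simp only [Pmat, Matrix.of_apply]; by_cases h : i = 0 <;> simp [h]
  simp [this]

lemma prod_ite_fin (m : ℕ) [NeZero m] (a b : ℝ) :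
    ∏ i : Fin m, (if i = 0 then a else b) = a * b ^ (m - 1) := by
  rw [← Finset.mul_prod_erase Finset.univ _ (Finset.mem_univ (0 : Fin m))]
  have h : ∀ i ∈ Finset.univ.erase (0 : Fin m), (if i = 0 then a else b) = b := by
    intro i hi
    simp [(Finset.mem_erase.mp hi).1]
  rw [Finset.prod_congr rfl h, Finset.prod_const, Finset.card_erase_of_mem (Finset.mem_univ _),
    Finset.card_univ, Fintype.card_fin]
  simp

/-- for a symmetric rectangular design with incidence matrix `N`,
`det(NNᵀ) = rk · θ₁^{n−1} θ₂^{m−1} θ₃^{(m−1)(n−1)} = (det N)²`,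
so `θ₁^{n−1} θ₂^{m−1} θ₃^{(m−1)(n−1)}` is a perfect square up to the factor `rk`. -/
theorem symmetric_RD_det (m n : ℕ) (hm : 2 ≤ m) (hn : 2 ≤ n)
    (r k l1 l2 l3 : ℝ)
    (N : Matrix (Fin m × Fin n) (Fin m × Fin n) ℝ)
    (h01 : ∀ x y, N x y = 0 ∨ N x y = 1)
    (hNNT : N * Nᵀ =
      r • ((1 : Matrix (Fin m) (Fin m) ℝ) ⊗ₖ (1 : Matrix (Fin n) (Fin n) ℝ))
      + l1 • ((1 : Matrix (Fin m) (Fin m) ℝ) ⊗ₖ (Jmat n - 1))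
      + l2 • ((Jmat m - 1) ⊗ₖ (1 : Matrix (Fin n) (Fin n) ℝ))
      + l3 • ((Jmat m - 1) ⊗ₖ (Jmat n - 1)))
    (hrk : r * k = r + ((n : ℝ) - 1) * l1 + ((m : ℝ) - 1) * l2
        + ((m : ℝ) - 1) * ((n : ℝ) - 1) * l3) :
    (N * Nᵀ).det =
      (r * k) * (r - l1 + ((m : ℝ) - 1) * (l2 - l3)) ^ (n - 1)
        * (r - l2 + ((n : ℝ) - 1) * (l1 - l3)) ^ (m - 1)
        * (r - l1 - l2 + l3) ^ ((m - 1) * (n - 1)) ∧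
    (N * Nᵀ).det = (N.det) ^ 2 := by
  haveI : NeZero m := ⟨by omega⟩
  haveI : NeZero n := ⟨by omega⟩
  constructor
  · -- first part
    set P : Matrix (Fin m × Fin n) (Fin m × Fin n) ℝ := Pmat m ⊗ₖ Pmat n with hP
    set M' : Matrix (Fin m × Fin n) (Fin m × Fin n) ℝ :=
      r • ((1 : Matrix (Fin m) (Fin m) ℝ) ⊗ₖ (1 : Matrix (Fin n) (Fin n) ℝ))
      + l1 • ((1 : Matrix (Fin m) (Fin m) ℝ) ⊗ₖ (Tmat n - 1))
      + l2 • ((Tmat m - 1) ⊗ₖ (1 : Matrix (Fin n) (Fin n) ℝ))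
      + l3 • ((Tmat m - 1) ⊗ₖ (Tmat n - 1)) with hM'
    have hJPm : (Jmat m - 1) * Pmat m = Pmat m * (Tmat m - 1) := by
      rw [Matrix.sub_mul, Matrix.mul_sub, JP, Matrix.one_mul, Matrix.mul_one]
    have hJPn : (Jmat n - 1) * Pmat n = Pmat n * (Tmat n - 1) := by
      rw [Matrix.sub_mul, Matrix.mul_sub, JP, Matrix.one_mul, Matrix.mul_one]
    have key : ∀ (A A' : Matrix (Fin m) (Fin m) ℝ) (B B' : Matrix (Fin n) (Fin n) ℝ),
        A * Pmat m = Pmat m * A' → B * Pmat n = Pmat n * B' →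
        (A ⊗ₖ B) * P = P * (A' ⊗ₖ B') := by
      intro A A' B B' hA hB
      rw [hP, ← Matrix.mul_kronecker_mul, ← Matrix.mul_kronecker_mul, hA, hB]
    have hstep : (N * Nᵀ) * P = P * M' := by
      rw [hNNT, hM']
      rw [Matrix.add_mul, Matrix.add_mul, Matrix.add_mul,
        Matrix.mul_add, Matrix.mul_add, Matrix.mul_add]
      rw [smul_mul_assoc, smul_mul_assoc, smul_mul_assoc, smul_mul_assoc,
        mul_smul_comm, mul_smul_comm, mul_smul_comm, mul_smul_comm]
      rw [key 1 1 1 1 (by rw [Matrix.one_mul, Matrix.mul_one]) (by rw [Matrix.one_mul, Matrix.mul_one]),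
        key 1 1 _ _ (by rw [Matrix.one_mul, Matrix.mul_one]) hJPn,
        key _ _ 1 1 hJPm (by rw [Matrix.one_mul, Matrix.mul_one]),
        key _ _ _ _ hJPm hJPn]
    have hdetP : P.det = 1 := by
      rw [hP, Matrix.det_kronecker, detP, detP, one_pow, one_pow, one_mul]
    have hdet : (N * Nᵀ).det = M'.det := by
      have h2 : (N * Nᵀ).det * P.det = P.det * M'.det := by
        rw [← Matrix.det_mul, ← Matrix.det_mul, hstep]
      rw [hdetP, mul_one, one_mul] at h2
      exact h2
    -- entries of M'
    have hentry : ∀ x y : Fin m × Fin n, M' x y =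
        r * ((1 : Matrix (Fin m) (Fin m) ℝ) x.1 y.1 * (1 : Matrix (Fin n) (Fin n) ℝ) x.2 y.2)
        + l1 * ((1 : Matrix (Fin m) (Fin m) ℝ) x.1 y.1 * (Tmat n - 1) x.2 y.2)
        + l2 * ((Tmat m - 1) x.1 y.1 * (1 : Matrix (Fin n) (Fin n) ℝ) x.2 y.2)
        + l3 * ((Tmat m - 1) x.1 y.1 * (Tmat n - 1) x.2 y.2) := by
      intro x y
      rw [hM']
      simp only [Matrix.add_apply, Matrix.smul_apply, Matrix.kroneckerMap_apply, smul_eq_mul]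
    -- triangularity via Lex reindex
    have htri : (Matrix.reindex (toLex : (Fin m × Fin n) ≃ (Fin m ×ₗ Fin n)) toLex M').BlockTriangular id := by
      intro x y hxy
      simp only [Matrix.reindex_apply, Matrix.submatrix_apply]
      set a := (toLex : (Fin m × Fin n) ≃ _).symm x with ha
      set b := (toLex : (Fin m × Fin n) ≃ _).symm y with hb
      have hlt : b.1 < a.1 ∨ b.1 = a.1 ∧ b.2 < a.2 := by
        exact Prod.Lex.lt_iff.mp hxy
      rw [hentry]
      rcases hlt with h1 | ⟨h1, h2⟩
      · have hne : a.1 ≠ b.1 := fun h => absurd h1 (by rw [h]; exact lt_irrefl _)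
        have ha0 : a.1 ≠ 0 := by
          intro h; rw [h] at h1; exact absurd h1 (not_lt.mpr (Fin.zero_le _))
        have e1 : (1 : Matrix (Fin m) (Fin m) ℝ) a.1 b.1 = 0 := Matrix.one_apply_ne hne
        have e2 : (Tmat m - 1) a.1 b.1 = 0 := by
          simp [Tmat, Matrix.sub_apply, ha0, Matrix.one_apply_ne hne]
        rw [e1, e2]; ring
      · have hne : a.2 ≠ b.2 := fun h => absurd h2 (by rw [h]; exact lt_irrefl _)
        have ha0 : a.2 ≠ 0 := by
          intro h; rw [h] at h2; exact absurd h2 (not_lt.mpr (Fin.zero_le _))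
        have e1 : (1 : Matrix (Fin n) (Fin n) ℝ) a.2 b.2 = 0 := Matrix.one_apply_ne hne
        have e2 : (Tmat n - 1) a.2 b.2 = 0 := by
          simp [Tmat, Matrix.sub_apply, ha0, Matrix.one_apply_ne hne]
        rw [e1, e2]; ring
    have hdet2 : M'.det = ∏ x : Fin m × Fin n, M' x x := by
      rw [← Matrix.det_reindex_self (toLex : (Fin m × Fin n) ≃ (Fin m ×ₗ Fin n)) M',
        Matrix.det_of_upperTriangular htri]
      exact Fintype.prod_equiv (toLex : (Fin m × Fin n) ≃ (Fin m ×ₗ Fin n)).symm _ _ (fun x => by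
        simp [Matrix.reindex_apply, Matrix.submatrix_apply])
    -- diagonal values
    have hdiag : ∀ x : Fin m × Fin n, M' x x =
        if x.1 = 0 then (if x.2 = 0 then r * k else (r - l1 + ((m : ℝ) - 1) * (l2 - l3)))
        else (if x.2 = 0 then (r - l2 + ((n : ℝ) - 1) * (l1 - l3)) else (r - l1 - l2 + l3)) := by
      intro x
      rw [hentry]
      have d1 : (1 : Matrix (Fin m) (Fin m) ℝ) x.1 x.1 = 1 := Matrix.one_apply_eq _
      have d2 : (1 : Matrix (Fin n) (Fin n) ℝ) x.2 x.2 = 1 := Matrix.one_apply_eq _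
      have t1 : (Tmat m - 1) x.1 x.1 = if x.1 = 0 then (m : ℝ) - 1 else -1 := by
        by_cases h : x.1 = 0 <;> simp [Tmat, Matrix.sub_apply, h]
      have t2 : (Tmat n - 1) x.2 x.2 = if x.2 = 0 then (n : ℝ) - 1 else -1 := by
        by_cases h : x.2 = 0 <;> simp [Tmat, Matrix.sub_apply, h]
      rw [d1, d2, t1, t2]
      by_cases h1 : x.1 = 0 <;> by_cases h2 : x.2 = 0
      · simp only [if_pos h1, if_pos h2]; rw [hrk]; ring
      · simp only [if_pos h1, if_neg h2]; ring
      · simp only [if_neg h1, if_pos h2]; ring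
      · simp only [if_neg h1, if_neg h2]; ring
    rw [hdet, hdet2]
    rw [Fintype.prod_prod_type]
    have hinner : ∀ i : Fin m, (∏ j : Fin n, M' (i, j) (i, j)) =
        if i = 0 then (r * k) * (r - l1 + ((m : ℝ) - 1) * (l2 - l3)) ^ (n - 1)
        else (r - l2 + ((n : ℝ) - 1) * (l1 - l3)) * (r - l1 - l2 + l3) ^ (n - 1) := by
      intro i
      by_cases h : i = 0
      · rw [if_pos h, ← prod_ite_fin n]
        exact Finset.prod_congr rfl fun j _ => by rw [hdiag]; simp [h]
      · rw [if_neg h, ← prod_ite_fin n]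
        exact Finset.prod_congr rfl fun j _ => by rw [hdiag]; simp [h]
    rw [Finset.prod_congr rfl (fun i _ => hinner i), prod_ite_fin m, mul_pow, ← pow_mul]
    ring_nf
  · rw [Matrix.det_mul, Matrix.det_transpose, sq]
end

section
/- If N₁ is the incidence matrix of a symmetric 2-(v₁, k₁, λ') design and N₂ the incidence matrix of a skew-Hadamard 2-(4t−1, 2t−1, t−1) design, then N = N₁ ⊗ N₂ + (J_{v₁} − N₁) ⊗ I_{4t−1} is the incidence matrix of a rectangular design with v = b = (4t−1)v₁, r = k = 2k₁(t−1) + v₁, λ₁ = (t−1)k₁ (same-row pairs), λ₂ = v₁ − 2k₁ + 2tλ', λ₃ = k₁ + λ'(t−2), m = v₁, n = 4t−1; i.e. NNᵀ = k(I_{v₁}⊗I_{4t−1}) + λ₁(I_{v₁}⊗(J−I)_{4t−1}) + λ₂((J−I)_{v₁}⊗I_{4t−1}) + λ₃((J−I)_{v₁}⊗(J−I)_{4t−1}). -/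
open Matrix Kronecker

lemma Jmat_transpose (m : ℕ) : (Jmat m)ᵀ = Jmat m := rfl

lemma Jmat_mul_Jmat (m : ℕ) : Jmat m * Jmat m = (m : ℝ) • Jmat m := by
  ext x y
  simp [Jmat, Matrix.mul_apply]

lemma sub_kronecker' {m n : ℕ} (A B : Matrix (Fin m) (Fin m) ℝ)
    (C : Matrix (Fin n) (Fin n) ℝ) : (A - B) ⊗ₖ C = A ⊗ₖ C - B ⊗ₖ C := by
  ext x y
  simp [Matrix.kroneckerMap_apply, sub_mul]

lemma kronecker_sub' {m n : ℕ} (A : Matrix (Fin m) (Fin m) ℝ)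
    (B C : Matrix (Fin n) (Fin n) ℝ) : A ⊗ₖ (B - C) = A ⊗ₖ B - A ⊗ₖ C := by
  ext x y
  simp [Matrix.kroneckerMap_apply, mul_sub]

lemma row_sum {v : ℕ} (k lam : ℝ) (M : Matrix (Fin v) (Fin v) ℝ)
    (h01 : ∀ x y, M x y = 0 ∨ M x y = 1)
    (hM : M * Mᵀ = (k - lam) • (1 : Matrix (Fin v) (Fin v) ℝ) + lam • Jmat v) :
    M * Jmat v = k • Jmat v := by
  ext x y
  have hd := congrFun (congrFun hM x) x
  simp only [Matrix.mul_apply, Matrix.transpose_apply, Matrix.add_apply,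
    Matrix.smul_apply, Matrix.one_apply_eq, Jmat, Matrix.of_apply, smul_eq_mul,
    mul_one] at hd
  have hsq : ∀ j, M x j * M x j = M x j := by
    intro j; rcases h01 x j with h | h <;> simp [h]
  simp only [hsq] at hd
  simp only [Matrix.mul_apply, Jmat, Matrix.of_apply, mul_one, Matrix.smul_apply,
    smul_eq_mul]
  rw [hd]; ring

/-- Theorem 3: from a symmetric `2-(v₁,k₁,λ')` design `N₁` and a
skew-Hadamard `2-(4t−1,2t−1,t−1)` design `N₂`, the matrix
`N = N₁ ⊗ N₂ + (J − N₁) ⊗ I` is the incidence matrix of a rectangular design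
with `k = 2k₁(t−1)+v₁`, `λ₁ = (t−1)k₁`, `λ₂ = v₁ − 2k₁ + 2tλ'`,
`λ₃ = k₁ + λ'(t−2)`, `m = v₁`, `n = 4t−1`. -/
theorem kronecker_skew_hadamard_RD (v₁ t : ℕ) (ht : 1 ≤ t) (k₁ lam' : ℝ)
    (N₁ : Matrix (Fin v₁) (Fin v₁) ℝ)
    (N₂ : Matrix (Fin (4 * t - 1)) (Fin (4 * t - 1)) ℝ)
    (h01 : ∀ x y, N₁ x y = 0 ∨ N₁ x y = 1)
    (h02 : ∀ x y, N₂ x y = 0 ∨ N₂ x y = 1)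
    (hN₁ : N₁ * N₁ᵀ = (k₁ - lam') • (1 : Matrix (Fin v₁) (Fin v₁) ℝ) + lam' • Jmat v₁)
    (hN₁' : N₁ᵀ * N₁ = (k₁ - lam') • (1 : Matrix (Fin v₁) (Fin v₁) ℝ) + lam' • Jmat v₁)
    (hskew : N₂ + N₂ᵀ = Jmat (4 * t - 1) - 1)
    (hN₂ : N₂ * N₂ᵀ = (t : ℝ) • (1 : Matrix (Fin (4 * t - 1)) (Fin (4 * t - 1)) ℝ)
      + ((t : ℝ) - 1) • Jmat (4 * t - 1))
    (hN₂' : N₂ᵀ * N₂ = (t : ℝ) • (1 : Matrix (Fin (4 * t - 1)) (Fin (4 * t - 1)) ℝ)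
      + ((t : ℝ) - 1) • Jmat (4 * t - 1))
    (N : Matrix (Fin v₁ × Fin (4 * t - 1)) (Fin v₁ × Fin (4 * t - 1)) ℝ)
    (hN : N = N₁ ⊗ₖ N₂ + (Jmat v₁ - N₁) ⊗ₖ (1 : Matrix (Fin (4 * t - 1)) (Fin (4 * t - 1)) ℝ)) :
    N * Nᵀ =
      (2 * k₁ * ((t : ℝ) - 1) + v₁) •
        ((1 : Matrix (Fin v₁) (Fin v₁) ℝ) ⊗ₖ (1 : Matrix (Fin (4 * t - 1)) (Fin (4 * t - 1)) ℝ))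
      + (((t : ℝ) - 1) * k₁) •
        ((1 : Matrix (Fin v₁) (Fin v₁) ℝ) ⊗ₖ (Jmat (4 * t - 1) - 1))
      + ((v₁ : ℝ) - 2 * k₁ + 2 * t * lam') •
        ((Jmat v₁ - 1) ⊗ₖ (1 : Matrix (Fin (4 * t - 1)) (Fin (4 * t - 1)) ℝ))
      + (k₁ + lam' * ((t : ℝ) - 2)) •
        ((Jmat v₁ - 1) ⊗ₖ (Jmat (4 * t - 1) - 1)) := by
  have hrow : N₁ * Jmat v₁ = k₁ • Jmat v₁ := row_sum k₁ lam' N₁ h01 hN₁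
  have hcol' : N₁ᵀ * Jmat v₁ = k₁ • Jmat v₁ := by
    refine row_sum k₁ lam' N₁ᵀ (fun x y => h01 y x) ?_
    rw [Matrix.transpose_transpose]; exact hN₁'
  have hcol : Jmat v₁ * N₁ = k₁ • Jmat v₁ := by
    have := congrArg Matrix.transpose hcol'
    simpa [Matrix.transpose_mul, Jmat_transpose, Matrix.transpose_smul] using this
  have hJNt : Jmat v₁ * N₁ᵀ = k₁ • Jmat v₁ := by
    have := congrArg Matrix.transpose hrow
    simpa [Matrix.transpose_mul, Jmat_transpose, Matrix.transpose_smul] using this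
  subst hN
  rw [Matrix.transpose_add, ← Matrix.kroneckerMap_transpose, ← Matrix.kroneckerMap_transpose,
    Matrix.transpose_sub, Jmat_transpose, Matrix.transpose_one]
  rw [add_mul, mul_add, mul_add, ← Matrix.mul_kronecker_mul, ← Matrix.mul_kronecker_mul,
    ← Matrix.mul_kronecker_mul, ← Matrix.mul_kronecker_mul]
  rw [Matrix.mul_sub N₁, Matrix.sub_mul, Matrix.sub_mul, Matrix.mul_sub (Jmat v₁),
    Matrix.mul_sub N₁]
  rw [hN₁, hN₂, hrow, hJNt, Jmat_mul_Jmat, Matrix.mul_one, Matrix.one_mul,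
    eq_sub_of_add_eq' hskew]
  -- expand everything into the four kronecker atoms
  simp only [sub_kronecker', kronecker_sub', Matrix.add_kronecker, Matrix.kronecker_add,
    Matrix.smul_kronecker, Matrix.kronecker_smul, smul_smul, smul_sub, sub_smul, smul_add,
    Matrix.one_mul]
  module
end

section
/- If M is the incidence matrix of a 2-(v, k, λ) design with replication r satisfying (n−1)² = kr/(r−λ), then N = M ⊗ (J_n − I_n) is the incidence matrix of a Latin regular rectangular design with parameters v* = vn, b* = bn, r* = r(n−1), k* = k(n−1), λ₁* = (n−2)r, λ₂* = λ(n−1), λ₃* = λ(n−2), m = v, n. -/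
open Matrix Kronecker

/-- Theorem 5: if `M` is the incidence matrix of a
`2-(v,k,λ)` design with replication `r` satisfying `(n−1)² = kr/(r−λ)`, then
`N = M ⊗ (J_n − I_n)` is the incidence matrix of a Latin regular rectangular
design with `r* = r(n−1)`, `k* = k(n−1)`, `λ₁* = (n−2)r`, `λ₂* = λ(n−1)`,
`λ₃* = λ(n−2)`, `m = v`, `n`. -/
theorem bibd_to_latin_regular_RD (v b n : ℕ) (hn : 2 ≤ n)
    (r k lam : ℝ)
    (M : Matrix (Fin v) (Fin b) ℝ)
    (h01 : ∀ x j, M x j = 0 ∨ M x j = 1)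
    (hcol : ∀ j, ∑ x, M x j = k)
    (hrow : ∀ x, ∑ j, M x j = r)
    (hMMT : M * Mᵀ = (r - lam) • (1 : Matrix (Fin v) (Fin v) ℝ) + lam • Jmat v)
    (hbal : r * (k - 1) = lam * ((v : ℝ) - 1))
    (hcond : ((n : ℝ) - 1) ^ 2 = k * r / (r - lam))
    (N : Matrix (Fin v × Fin n) (Fin b × Fin n) ℝ)
    (hN : N = M ⊗ₖ (Jmat n - 1)) :
    -- N has the NNᵀ structure of a rectangular design with the stated parameters
    N * Nᵀ =
      (r * ((n : ℝ) - 1)) • ((1 : Matrix (Fin v) (Fin v) ℝ) ⊗ₖ (1 : Matrix (Fin n) (Fin n) ℝ))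
      + (((n : ℝ) - 2) * r) • ((1 : Matrix (Fin v) (Fin v) ℝ) ⊗ₖ (Jmat n - 1))
      + (lam * ((n : ℝ) - 1)) • ((Jmat v - 1) ⊗ₖ (1 : Matrix (Fin n) (Fin n) ℝ))
      + (lam * ((n : ℝ) - 2)) • ((Jmat v - 1) ⊗ₖ (Jmat n - 1)) ∧
    -- block size k* = k(n−1) and replication r* = r(n−1)
    (∀ q, ∑ p, N p q = k * ((n : ℝ) - 1)) ∧
    (∀ p, ∑ q, N p q = r * ((n : ℝ) - 1)) ∧
    -- Latin regularity: θ₁ = θ₂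
    (r * ((n : ℝ) - 1) - ((n : ℝ) - 2) * r
        + ((v : ℝ) - 1) * (lam * ((n : ℝ) - 1) - lam * ((n : ℝ) - 2))
      = r * ((n : ℝ) - 1) - lam * ((n : ℝ) - 1)
        + ((n : ℝ) - 1) * (((n : ℝ) - 2) * r - lam * ((n : ℝ) - 2))) := by
  have hJT : (Jmat n - 1)ᵀ = Jmat n - 1 := by
    ext i j
    simp [Jmat, Matrix.one_apply, eq_comm]
  have hJsum : ∀ l : Fin n, ∑ i, (Jmat n - 1) i l = (n : ℝ) - 1 := by
    intro l
    simp [Jmat, Matrix.sub_apply, Matrix.one_apply, Finset.sum_sub_distrib]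
  have hJsum' : ∀ l : Fin n, ∑ i, (Jmat n - 1) l i = (n : ℝ) - 1 := by
    intro l
    simp [Jmat, Matrix.sub_apply, Matrix.one_apply, Finset.sum_sub_distrib]
  have hJJ : Jmat n * Jmat n = (n : ℝ) • Jmat n := by
    ext i j
    simp [Jmat, Matrix.mul_apply]
  have hJ2 : (Jmat n - 1) * (Jmat n - 1)
      = ((n : ℝ) - 1) • (1 : Matrix (Fin n) (Fin n) ℝ) + ((n : ℝ) - 2) • (Jmat n - 1) := by
    rw [sub_mul, mul_sub, mul_sub, mul_one, one_mul, mul_one, hJJ]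
    module
  have hMMT' : M * Mᵀ = r • (1 : Matrix (Fin v) (Fin v) ℝ) + lam • (Jmat v - 1) := by
    rw [hMMT]; module
  refine ⟨?_, ?_, ?_, ?_⟩
  · rw [hN]
    rw [show (M ⊗ₖ (Jmat n - 1))ᵀ = Mᵀ ⊗ₖ (Jmat n - 1)ᵀ from
      (kroneckerMap_transpose _ _ _).symm]
    rw [hJT, ← Matrix.mul_kronecker_mul, hMMT', hJ2]
    simp only [Matrix.add_kronecker, Matrix.kronecker_add, Matrix.smul_kronecker,
      Matrix.kronecker_smul, smul_smul]
    module
  · intro q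
    rw [hN]
    rw [Fintype.sum_prod_type]
    have : ∀ x : Fin v, ∑ i : Fin n, (M ⊗ₖ (Jmat n - 1)) (x, i) q
        = M x q.1 * ((n : ℝ) - 1) := by
      intro x
      simp only [kroneckerMap_apply]
      rw [← Finset.mul_sum, hJsum]
    rw [Finset.sum_congr rfl fun x _ => this x, ← Finset.sum_mul, hcol]
  · intro p
    rw [hN]
    rw [Fintype.sum_prod_type]
    have : ∀ j : Fin b, ∑ i : Fin n, (M ⊗ₖ (Jmat n - 1)) p (j, i)
        = M p.1 j * ((n : ℝ) - 1) := by
      intro j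
      simp only [kroneckerMap_apply]
      rw [← Finset.mul_sum, hJsum']
    rw [Finset.sum_congr rfl fun j _ => this j, ← Finset.sum_mul, hrow]
  · have hne : r - lam ≠ 0 := by
      intro h
      rw [h, div_zero] at hcond
      have : (2:ℝ) ≤ (n:ℝ) := by exact_mod_cast hn
      nlinarith
    have hk : k * r = ((n : ℝ) - 1) ^ 2 * (r - lam) := by
      field_simp at hcond
      linarith
    nlinarith [hbal, hk]
end

section
/- Given m mutually orthogonal Latin squares of order n, each with first row (1,2,…,n), the mn × n(n−1) block matrix N = [N_{ij}] (i = 1,…,m; j = 2,…,n), where N_{ij} is the permutation matrix of row j of the i-th square, satisfies NNᵀ = (n−1)(I_m⊗I_n) + 0·(I_m⊗(J−I)_n) + 0·((J−I)_m⊗I_n) + 1·((J−I)_m⊗(J−I)_n); hence N is the incidence matrix of a resolvable semi-regular rectangular design with v = mn, b = n(n−1), r = n−1, k = m, λ₁ = λ₂ = 0, λ₃ = 1. -/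
/-!
Entry `((i, x), (i', y))` of `N Nᵀ` counts the cells `(j, c)` with `j ≠ 0` in which square `i`
holds `x` and square `i'` holds `y`. Over all rows this count is `n [x = y]` when `i = i'`
(each row is a permutation) and `1` when `i ≠ i'` (orthogonality); the first row, being the
identity in every square, contributes exactly `[x = y]`, which is subtracted.
-/

open Matrix Kronecker Finset

theorem Function.Bijective.sum_ite_eq_one {α β R : Type*} [Fintype α] [Fintype β]
    [DecidableEq β] [AddCommMonoidWithOne R] {f : α → β} (hf : Function.Bijective f) (y : β) :
    ∑ a, (if y = f a then (1 : R) else 0) = 1 := by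
  rw [hf.sum_comp fun b => if y = b then (1 : R) else 0]
  simp

namespace LatinSquares

variable {ι ρ σ R : Type*} [DecidableEq σ] (L : ι → ρ → σ → σ)

/-- Block `(i, r)` is the paper's `N_{ir}`, the permutation matrix of row `r` of square `i`. -/
def incidenceMatrix [Zero R] [One R] (r₀ : ρ) : Matrix (ι × σ) ({r // r ≠ r₀} × σ) R :=
  of fun p q => if p.2 = L p.1 q.1 q.2 then 1 else 0

section

variable [Fintype ρ] [Fintype σ] [Ring R]

theorem sum_cells_with_pair_self {i : ι} (hrow : ∀ r, Function.Bijective (L i r)) (x y : σ) :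
    ∑ q : ρ × σ, (if x = L i q.1 q.2 ∧ y = L i q.1 q.2 then (1 : R) else 0) =
      if x = y then (Fintype.card ρ : R) else 0 := by
  split_ifs with hxy
  · subst hxy
    simp only [and_self, Fintype.sum_prod_type, (hrow _).sum_ite_eq_one, sum_const, card_univ,
      nsmul_one]
  · exact sum_eq_zero fun q _ => if_neg fun h => hxy (h.1.trans h.2.symm)

theorem sum_cells_with_pair_of_orthogonal {i i' : ι}
    (horth : Function.Bijective fun p : ρ × σ => (L i p.1 p.2, L i' p.1 p.2)) (x y : σ) :
    ∑ q : ρ × σ, (if x = L i q.1 q.2 ∧ y = L i' q.1 q.2 then (1 : R) else 0) = 1 := by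
  simpa only [Prod.mk.injEq] using horth.sum_ite_eq_one (R := R) (x, y)

variable [DecidableEq ρ] {L}

theorem incidenceMatrix_mul_transpose_apply {r₀ : ρ} (h₀ : ∀ i c, L i r₀ c = c) (i i' : ι)
    (x y : σ) :
    (incidenceMatrix (R := R) L r₀ * (incidenceMatrix (R := R) L r₀)ᵀ) (i, x) (i', y) =
      ∑ q : ρ × σ, (if x = L i q.1 q.2 ∧ y = L i' q.1 q.2 then (1 : R) else 0) -
        if x = y then 1 else 0 := by
  have first_row : ∑ c : σ, (if x = L i r₀ c ∧ y = L i' r₀ c then (1 : R) else 0) =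
      if x = y then 1 else 0 := by
    simp only [h₀]
    split_ifs with hxy
    · subst hxy
      simp
    · exact sum_eq_zero fun c _ => if_neg fun h => hxy (h.1.trans h.2.symm)
  have other_rows :
      (incidenceMatrix (R := R) L r₀ * (incidenceMatrix (R := R) L r₀)ᵀ) (i, x) (i', y) =
        ∑ q : {r // r ≠ r₀} × σ, if x = L i q.1 q.2 ∧ y = L i' q.1 q.2 then 1 else 0 := by
    simp only [mul_apply, incidenceMatrix, transpose_apply, of_apply, ite_zero_mul_ite_zero,
      mul_one]
  rw [other_rows, eq_sub_iff_add_eq', ← first_row, Fintype.sum_prod_type, Fintype.sum_prod_type,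
    Fintype.sum_eq_add_sum_subtype_ne _ r₀]

theorem sum_incidenceMatrix_apply_row {r₀ : ρ} (hrow : ∀ i r, Function.Bijective (L i r))
    (p : ι × σ) : ∑ q, incidenceMatrix (R := R) L r₀ p q = Fintype.card ρ - 1 := by
  have all_rows :
      ∑ r : ρ, ∑ c : σ, (if p.2 = L p.1 r c then (1 : R) else 0) = Fintype.card ρ := by
    simp only [(hrow _ _).sum_ite_eq_one, sum_const, card_univ, nsmul_one]
  rw [Fintype.sum_eq_add_sum_subtype_ne _ r₀, (hrow _ _).sum_ite_eq_one] at all_rows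
  rw [eq_sub_iff_add_eq', ← all_rows, Fintype.sum_prod_type]
  rfl

end

theorem sum_incidenceMatrix_apply_col [Fintype ι] [Fintype σ] [AddCommMonoidWithOne R]
    {r₀ : ρ} (q : {r // r ≠ r₀} × σ) :
    ∑ p, incidenceMatrix (R := R) L r₀ p q = Fintype.card ι := by
  simp only [incidenceMatrix, of_apply, Fintype.sum_prod_type, Finset.sum_ite_eq', mem_univ,
    if_true, sum_const, card_univ, nsmul_one]

end LatinSquares

open LatinSquares in
theorem mols_to_RD_general (m n : ℕ) [NeZero n]
    (L : Fin m → Fin n → Fin n → Fin n)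
    (hrow : ∀ i j, Function.Bijective (L i j))
    (horth : ∀ i i', i ≠ i' →
      Function.Bijective (fun p : Fin n × Fin n => (L i p.1 p.2, L i' p.1 p.2)))
    (h0 : ∀ i c, L i 0 c = c)
    (N : Matrix (Fin m × Fin n) ({j : Fin n // j ≠ 0} × Fin n) ℝ)
    (hN : N = fun p q => if p.2 = L p.1 q.1.val q.2 then 1 else 0) :
    N * Nᵀ =
      ((n : ℝ) - 1) • ((1 : Matrix (Fin m) (Fin m) ℝ) ⊗ₖ (1 : Matrix (Fin n) (Fin n) ℝ))
      + (0 : ℝ) • ((1 : Matrix (Fin m) (Fin m) ℝ) ⊗ₖ (Jmat n - 1))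
      + (0 : ℝ) • ((Jmat m - 1) ⊗ₖ (1 : Matrix (Fin n) (Fin n) ℝ))
      + (1 : ℝ) • ((Jmat m - 1) ⊗ₖ (Jmat n - 1)) ∧
    (∀ q, ∑ p, N p q = (m : ℝ)) ∧
    (∀ p, ∑ q, N p q = (n : ℝ) - 1) := by
  obtain rfl : N = incidenceMatrix L 0 := hN
  refine ⟨?_, fun q => by simpa using sum_incidenceMatrix_apply_col L q,
    fun p => by simpa using sum_incidenceMatrix_apply_row hrow p⟩
  ext ⟨i, x⟩ ⟨i', y⟩
  rw [incidenceMatrix_mul_transpose_apply h0]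
  obtain rfl | hii := eq_or_ne i i'
  · rw [sum_cells_with_pair_self L (hrow i)]
    by_cases hxy : x = y <;> simp [hxy, Jmat, one_apply]
  · rw [sum_cells_with_pair_of_orthogonal L (horth i i' hii)]
    by_cases hxy : x = y <;> simp [hxy, hii, Jmat, one_apply]

/-- Theorem 7: from `m` MOLS of order `n` (identity first rows),
the block matrix `N = [N_{ij}]` of permutation matrices of the rows `j ≥ 2`
satisfies `NNᵀ = (n−1)(I⊗I) + 0·(I⊗(J−I)) + 0·((J−I)⊗I) + 1·((J−I)⊗(J−I))`,
i.e. it is the incidence matrix of a resolvable semi-regular rectangular design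
with `v = mn`, `b = n(n−1)`, `r = n−1`, `k = m`, `λ₁ = λ₂ = 0`, `λ₃ = 1`. -/
theorem mols_to_RD (m n : ℕ) [NeZero n] (hn : 2 ≤ n)
    (L : Fin m → Fin n → Fin n → Fin n)
    (hrow : ∀ i j, Function.Bijective (L i j))
    (hcol : ∀ i c, Function.Bijective (fun j => L i j c))
    (horth : ∀ i i', i ≠ i' →
      Function.Bijective (fun p : Fin n × Fin n => (L i p.1 p.2, L i' p.1 p.2)))
    (h0 : ∀ i c, L i 0 c = c)
    (N : Matrix (Fin m × Fin n) ({j : Fin n // j ≠ 0} × Fin n) ℝ)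
    (hN : N = fun p q => if p.2 = L p.1 q.1.val q.2 then 1 else 0) :
    N * Nᵀ =
      ((n : ℝ) - 1) • ((1 : Matrix (Fin m) (Fin m) ℝ) ⊗ₖ (1 : Matrix (Fin n) (Fin n) ℝ))
      + (0 : ℝ) • ((1 : Matrix (Fin m) (Fin m) ℝ) ⊗ₖ (Jmat n - 1))
      + (0 : ℝ) • ((Jmat m - 1) ⊗ₖ (1 : Matrix (Fin n) (Fin n) ℝ))
      + (1 : ℝ) • ((Jmat m - 1) ⊗ₖ (Jmat n - 1)) ∧
    (∀ q, ∑ p, N p q = (m : ℝ)) ∧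
    (∀ p, ∑ q, N p q = (n : ℝ) - 1) :=
  mols_to_RD_general m n L hrow horth h0 N hN
end

section
/- A resolvable rectangular design that is regular (all three eigenvalues θ₁, θ₂, θ₃ of NNᵀ positive) satisfies b ≥ v + r − 1; consequently a symmetric (b = v) regular rectangular design cannot be resolvable unless r = 1. -/
open Matrix Finset

/-- Theorem 2(ii),(iii): a resolvable regular rectangular design
(full row rank incidence matrix) satisfies `b ≥ v + r − 1`; consequently a
symmetric (`b = v`) regular rectangular design cannot be resolvable unless
`r = 1`. -/
theorem resolvable_regular_bound (v b r : ℕ) (hv : 0 < v)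
    (N : Matrix (Fin v) (Fin b) ℝ)
    (h01 : ∀ x j, N x j = 0 ∨ N x j = 1)
    (hrep : ∀ x, ∑ j, N x j = (r : ℝ))
    (hrank : N.rank = v)
    (c : Fin b → Fin r)
    (hres : ∀ (t : Fin r) (x : Fin v),
      ∑ j ∈ Finset.univ.filter (fun j => c j = t), N x j = 1) :
    v + r ≤ b + 1 ∧ (b = v → r = 1) := by
  -- r ≥ 1
  have hrpos : 0 < r := by
    by_contra h
    push_neg at h
    interval_cases r
    have hN : N = 0 := by
      ext x j
      have h0 : ∑ j, N x j = 0 := by simpa using hrep x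
      have hnn : ∀ j ∈ Finset.univ, (0:ℝ) ≤ N x j := by
        intro j _; rcases h01 x j with h | h <;> simp [h]
      have := (Finset.sum_eq_zero_iff_of_nonneg hnn).mp h0 j (Finset.mem_univ j)
      simpa using this
    rw [hN, Matrix.rank_zero] at hrank
    omega
  have x0 : Fin v := ⟨0, hv⟩
  set t0 : Fin r := ⟨0, hrpos⟩ with ht0
  -- each class is nonempty
  have hclass : ∀ t : Fin r, ∃ j, c j = t := by
    intro t
    by_contra h
    push_neg at h
    have h1 := hres t x0
    rw [Finset.filter_false_of_mem (fun j _ => h j)] at h1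
    simp at h1
  -- kernel vectors
  set u : {t : Fin r // t ≠ t0} → (Fin b → ℝ) :=
    fun t j => (if c j = t.1 then (1:ℝ) else 0) - (if c j = t0 then 1 else 0) with hu
  have hsum1 : ∀ (t : Fin r) (x : Fin v),
      ∑ j, N x j * (if c j = t then (1:ℝ) else 0) = 1 := by
    intro t x
    have : ∑ j, N x j * (if c j = t then (1:ℝ) else 0)
        = ∑ j ∈ Finset.univ.filter (fun j => c j = t), N x j := by
      rw [Finset.sum_filter]
      apply Finset.sum_congr rfl
      intro j _
      by_cases hj : c j = t <;> simp [hj]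
    rw [this, hres t x]
  have hker : ∀ t, N.mulVec (u t) = 0 := by
    intro t
    funext x
    simp only [Matrix.mulVec, dotProduct, hu, Pi.zero_apply]
    have : ∀ j, N x j * ((if c j = t.1 then (1:ℝ) else 0) - (if c j = t0 then 1 else 0))
        = N x j * (if c j = t.1 then (1:ℝ) else 0) - N x j * (if c j = t0 then 1 else 0) := by
      intro j; ring
    simp only [this, Finset.sum_sub_distrib]
    rw [hsum1 t.1 x, hsum1 t0 x]
    ring
  -- linear independence
  have hLI : LinearIndependent ℝ u := by
    rw [linearIndependent_iff']
    intro s g hsum t hts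
    obtain ⟨j, hj⟩ := hclass t.1
    have hjt0 : c j ≠ t0 := by
      rw [hj]; exact t.2
    have hval := congrFun hsum j
    simp only [Finset.sum_apply, Pi.smul_apply, smul_eq_mul, Pi.zero_apply, hu] at hval
    rw [Finset.sum_eq_single t] at hval
    · rw [if_pos hj, if_neg hjt0] at hval
      have ht' : ¬ (t.1 = t0) := t.2
      simpa using hval
    · intro t' _ htt'
      have : c j ≠ t'.1 := by
        rw [hj]
        intro hh
        exact htt' (Subtype.ext hh.symm)
      simp [this, hjt0]
    · intro h; exact absurd hts h
  -- lift to kernel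
  have huK : ∀ t, u t ∈ LinearMap.ker N.mulVecLin := by
    intro t
    rw [LinearMap.mem_ker, Matrix.mulVecLin_apply]
    exact hker t
  have hLI' : LinearIndependent ℝ
      (fun t => (⟨u t, huK t⟩ : LinearMap.ker N.mulVecLin)) := by
    apply LinearIndependent.of_comp (LinearMap.ker N.mulVecLin).subtype
    exact hLI
  have hcard : Fintype.card {t : Fin r // t ≠ t0}
      ≤ Module.finrank ℝ (LinearMap.ker N.mulVecLin) :=
    hLI'.fintype_card_le_finrank
  have hcard' : Fintype.card {t : Fin r // t ≠ t0} = r - 1 := by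
    have := Fintype.card_subtype_compl (fun t : Fin r => t = t0)
    set_option linter.unnecessarySimpa false in
    simpa [Fintype.card_subtype_eq] using this
  -- rank-nullity
  have hrn := LinearMap.finrank_range_add_finrank_ker N.mulVecLin
  have hfb : Module.finrank ℝ (Fin b → ℝ) = b := Module.finrank_fin_fun ℝ
  have hrk : Module.finrank ℝ (LinearMap.range N.mulVecLin) = v := hrank
  rw [hfb, hrk] at hrn
  have hbound : v + (r - 1) ≤ b := by
    have h2 : r - 1 ≤ Module.finrank ℝ (LinearMap.ker N.mulVecLin) := hcard' ▸ hcard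
    omega
  constructor
  · omega
  · intro hbv; omega
end
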